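/- Let a ∈ ℝ with a ∉ {0, 1}, λ := a/(1 − a), and M := {(z¹, z²) ∈ ℂ² : |Re z¹| < 1 and |z²| < 1}. On ℂ³ define X₀(w,z) := (i, 0, 0), X₁ := (0, i, 0), X₂ := (0, 0, i), X₃(w,z) := (1/2)(0, z¹ + 1, −λ(z² + 1)), X₄(w,z) := (1/2)(2a(w + 2), z¹ + 1, λ(z² + 1)). Then at every point p ∈ ℂ × M the five vectors X₀(p), X₁(p), X₂(p), X₃(p), X₄(p) ∈ ℂ³ are linearly independent over ℝ. Consequently, with F(w,z) := Re w − ρ_a(z) + 2 and ρ_a(z¹,z²) := 2(Re z¹ + 1)^a (Re z² + 1)^{1−a}, at every point p of S_a := {p ∈ ℂ × M : F(p) = 0} the values X₀(p),…,X₄(p) span the 5-dimensional real tangent space ker dF_p of the hypersurface S_a. -/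

import Mathlib

/-!
The five fields are independent over `ℝ` by inspection: the real parts of the last two
coordinates of `c₃ X₃ + c₄ X₄` are `(c₃ + c₄)(Re z¹ + 1)/2` and `λ (c₄ - c₃)(Re z² + 1)/2`,
which kills `c₃, c₄`, and then `X₀, X₁, X₂` are visibly independent. Writing
`dF = d(Re w) - ρ_a · (a d(Re z¹)/(Re z¹ + 1) + (1 - a) d(Re z²)/(Re z² + 1))`, the fields
`X₀, X₁, X₂` are killed because they are imaginary, `X₃` because `(1 - a) λ = a`, and `X₄`
because `Re w + 2 = ρ_a` on `S_a`. As `dF ≠ 0`, its kernel is 5-dimensional, so the five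
independent fields span it.
-/

open Complex ContinuousLinearMap

namespace HomogeneousHypersurface

variable (a l : ℝ)

noncomputable def rho (z₁ z₂ : ℂ) : ℝ := 2 * (z₁.re + 1) ^ a * (z₂.re + 1) ^ (1 - a)

noncomputable def levelFunction (q : ℂ × ℂ × ℂ) : ℝ := q.1.re - rho a q.2.1 q.2.2 + 2

noncomputable def levelDifferential (p : ℂ × ℂ × ℂ) : (ℂ × ℂ × ℂ) →L[ℝ] ℝ :=
  reCLM.comp (fst ℝ ℂ (ℂ × ℂ)) - rho a p.2.1 p.2.2 •
    ((a / (p.2.1.re + 1)) • reCLM.comp ((fst ℝ ℂ ℂ).comp (snd ℝ ℂ (ℂ × ℂ))) +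
      ((1 - a) / (p.2.2.re + 1)) • reCLM.comp ((snd ℝ ℂ ℂ).comp (snd ℝ ℂ (ℂ × ℂ))))

@[simp]
theorem levelDifferential_apply (p v : ℂ × ℂ × ℂ) :
    levelDifferential a p v = v.1.re - rho a p.2.1 p.2.2 *
      (a / (p.2.1.re + 1) * v.2.1.re + (1 - a) / (p.2.2.re + 1) * v.2.2.re) :=
  rfl

noncomputable def symmetryFrame (p : ℂ × ℂ × ℂ) : Fin 5 → ℂ × ℂ × ℂ :=
  ![(I, 0, 0), (0, I, 0), (0, 0, I),
    (1 / 2 : ℂ) • (0, p.2.1 + 1, -(l : ℂ) * (p.2.2 + 1)),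
    (1 / 2 : ℂ) • (2 * (a : ℂ) * (p.1 + 2), p.2.1 + 1, (l : ℂ) * (p.2.2 + 1))]

theorem finrank_ker_levelDifferential (p : ℂ × ℂ × ℂ) :
    Module.finrank ℝ (LinearMap.ker (levelDifferential a p : (ℂ × ℂ × ℂ) →ₗ[ℝ] ℝ)) = 5 := by
  have hne : (levelDifferential a p : (ℂ × ℂ × ℂ) →ₗ[ℝ] ℝ) ≠ 0 := fun h => by
    simpa using LinearMap.congr_fun h (1, 0, 0)
  have h := Module.Dual.finrank_ker_add_one_of_ne_zero hne
  rw [Module.finrank_prod, Module.finrank_prod, Complex.finrank_real_complex] at h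
  omega

variable {a l}

theorem re_add_one_ne_zero {z : ℂ} (h : |z.re| < 1) : z.re + 1 ≠ 0 :=
  ne_of_gt (by linarith [neg_lt_of_abs_lt h])

theorem hasFDerivAt_levelFunction {p : ℂ × ℂ × ℂ} (h₁ : p.2.1.re + 1 ≠ 0)
    (h₂ : p.2.2.re + 1 ≠ 0) : HasFDerivAt (levelFunction a) (levelDifferential a p) p := by
  have hw : HasFDerivAt (fun q : ℂ × ℂ × ℂ => q.1.re) (reCLM.comp (fst ℝ ℂ (ℂ × ℂ))) p :=
    (reCLM.comp (fst ℝ ℂ (ℂ × ℂ))).hasFDerivAt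
  have hx : HasFDerivAt (fun q : ℂ × ℂ × ℂ => q.2.1.re + 1)
      (reCLM.comp ((fst ℝ ℂ ℂ).comp (snd ℝ ℂ (ℂ × ℂ)))) p :=
    (reCLM.comp ((fst ℝ ℂ ℂ).comp (snd ℝ ℂ (ℂ × ℂ)))).hasFDerivAt.add_const 1
  have hy : HasFDerivAt (fun q : ℂ × ℂ × ℂ => q.2.2.re + 1)
      (reCLM.comp ((snd ℝ ℂ ℂ).comp (snd ℝ ℂ (ℂ × ℂ)))) p :=
    (reCLM.comp ((snd ℝ ℂ ℂ).comp (snd ℝ ℂ (ℂ × ℂ)))).hasFDerivAt.add_const 1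
  have hρ := ((hx.rpow_const (p := a) (Or.inl h₁)).const_mul 2).mul
    (hy.rpow_const (p := 1 - a) (Or.inl h₂))
  rw [Real.rpow_sub_one h₁, Real.rpow_sub_one h₂] at hρ
  refine ((hw.sub hρ).add_const 2).congr_fderiv ?_
  ext v <;> simp [rho] <;> ring

theorem linearIndependent_symmetryFrame (hl : l ≠ 0) {p : ℂ × ℂ × ℂ}
    (h₁ : p.2.1.re + 1 ≠ 0) (h₂ : p.2.2.re + 1 ≠ 0) :
    LinearIndependent ℝ (symmetryFrame a l p) := by
  rw [Fintype.linearIndependent_iff]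
  intro g hg
  simp only [symmetryFrame, Fin.sum_univ_five, Matrix.cons_val, Prod.smul_mk,
    Prod.mk_add_mk, Prod.mk_eq_zero, Complex.ext_iff, real_smul, smul_eq_mul, add_re, add_im,
    mul_re, mul_im, neg_re, neg_im, ofReal_re, ofReal_im, one_re, one_im, zero_re, zero_im, I_re,
    I_im, div_ofNat_re, div_ofNat_im, re_ofNat, im_ofNat] at hg
  obtain ⟨⟨-, him₀⟩, ⟨hre₁, him₁⟩, hre₂, him₂⟩ := hg
  have hsum : g 3 + g 4 = 0 := by
    have : (g 3 + g 4) * (p.2.1.re + 1) = 0 := by linear_combination 2 * hre₁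
    exact (mul_eq_zero.mp this).resolve_right h₁
  have hdiff : g 4 - g 3 = 0 := by
    have : (g 4 - g 3) * (l * (p.2.2.re + 1)) = 0 := by linear_combination 2 * hre₂
    exact (mul_eq_zero.mp this).resolve_right (mul_ne_zero hl h₂)
  have hg₃ : g 3 = 0 := by linarith
  have hg₄ : g 4 = 0 := by linarith
  have hg₀ : g 0 = 0 := by linear_combination him₀ - a * p.1.im * hg₄
  have hg₁ : g 1 = 0 := by linear_combination him₁ - p.2.1.im / 2 * hsum
  have hg₂ : g 2 = 0 := by linear_combination him₂ - l * p.2.2.im / 2 * hdiff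
  intro i
  fin_cases i <;> assumption

theorem symmetryFrame_mem_ker (hla : (1 - a) * l = a) {p : ℂ × ℂ × ℂ}
    (h₁ : p.2.1.re + 1 ≠ 0) (h₂ : p.2.2.re + 1 ≠ 0) (hp : levelFunction a p = 0) (i : Fin 5) :
    symmetryFrame a l p i ∈ LinearMap.ker (levelDifferential a p : (ℂ × ℂ × ℂ) →ₗ[ℝ] ℝ) := by
  rw [levelFunction] at hp
  have e₁ : a / (p.2.1.re + 1) * (p.2.1.re + 1) = a := div_mul_cancel₀ a h₁
  have e₂ : (1 - a) / (p.2.2.re + 1) * (p.2.2.re + 1) = 1 - a := div_mul_cancel₀ (1 - a) h₂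
  rw [LinearMap.mem_ker]
  fin_cases i <;>
    simp only [symmetryFrame, Fin.reduceFinMk, Matrix.cons_val, coe_coe, levelDifferential_apply,
      Prod.smul_mk, smul_eq_mul, mul_re, add_re, neg_re, ofReal_re, ofReal_im, one_re, zero_re,
      one_im, zero_im, neg_im, mul_im, I_re, div_ofNat_re, div_ofNat_im, re_ofNat, im_ofNat]
  · ring
  · ring
  · ring
  · linear_combination rho a p.2.1 p.2.2 / 2 * (hla - e₁ + l * e₂)
  · linear_combination a * hp - rho a p.2.1 p.2.2 / 2 * (hla + e₁ + l * e₂)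

theorem span_symmetryFrame_eq_ker (hl : l ≠ 0) (hla : (1 - a) * l = a) {p : ℂ × ℂ × ℂ}
    (h₁ : p.2.1.re + 1 ≠ 0) (h₂ : p.2.2.re + 1 ≠ 0) (hp : levelFunction a p = 0) :
    Submodule.span ℝ (Set.range (symmetryFrame a l p)) =
      LinearMap.ker (levelDifferential a p : (ℂ × ℂ × ℂ) →ₗ[ℝ] ℝ) := by
  refine Submodule.eq_of_le_of_finrank_eq
    (Submodule.span_le.mpr (Set.range_subset_iff.mpr (symmetryFrame_mem_ker hla h₁ h₂ hp))) ?_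
  rw [finrank_span_eq_card (linearIndependent_symmetryFrame hl h₁ h₂),
    finrank_ker_levelDifferential, Fintype.card_fin]

end HomogeneousHypersurface

open HomogeneousHypersurface

theorem stmt11 (a : ℝ) (ha0 : a ≠ 0) (ha1 : a ≠ 1) (l : ℝ) (hl : l = a / (1 - a))
    (X0 X1 X2 X3 X4 : ℂ × ℂ × ℂ → ℂ × ℂ × ℂ)
    (hX0 : ∀ p, X0 p = ((Complex.I, 0, 0) : ℂ × ℂ × ℂ))
    (hX1 : ∀ p, X1 p = ((0, Complex.I, 0) : ℂ × ℂ × ℂ))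
    (hX2 : ∀ p, X2 p = ((0, 0, Complex.I) : ℂ × ℂ × ℂ))
    (hX3 : ∀ p : ℂ × ℂ × ℂ, X3 p =
      ((1 : ℂ) / 2) • (((0 : ℂ), p.2.1 + 1, -(l : ℂ) * (p.2.2 + 1)) : ℂ × ℂ × ℂ))
    (hX4 : ∀ p : ℂ × ℂ × ℂ, X4 p =
      ((1 : ℂ) / 2) • ((2 * (a : ℂ) * (p.1 + 2), p.2.1 + 1, (l : ℂ) * (p.2.2 + 1)) : ℂ × ℂ × ℂ))
    (F : ℂ × ℂ × ℂ → ℝ)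
    (hF : ∀ p : ℂ × ℂ × ℂ, F p = p.1.re - 2 * (p.2.1.re + 1) ^ a * (p.2.2.re + 1) ^ (1 - a) + 2) :
    (∀ p : ℂ × ℂ × ℂ, |p.2.1.re| < 1 → ‖p.2.2‖ < 1 →
      LinearIndependent ℝ ![X0 p, X1 p, X2 p, X3 p, X4 p]) ∧
    (∀ p : ℂ × ℂ × ℂ, |p.2.1.re| < 1 → ‖p.2.2‖ < 1 → F p = 0 →
      Module.finrank ℝ ↥(LinearMap.ker (fderiv ℝ F p : ℂ × ℂ × ℂ →ₗ[ℝ] ℝ)) = 5 ∧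
      Submodule.span ℝ (Set.range ![X0 p, X1 p, X2 p, X3 p, X4 p])
        = LinearMap.ker (fderiv ℝ F p : ℂ × ℂ × ℂ →ₗ[ℝ] ℝ)) := by
  have hla : (1 - a) * l = a := by
    rw [hl]
    field_simp [sub_ne_zero.mpr ha1.symm]
  have hl0 : l ≠ 0 := by
    rintro rfl
    exact ha0 (by simpa using hla.symm)
  have hframe (p : ℂ × ℂ × ℂ) : ![X0 p, X1 p, X2 p, X3 p, X4 p] = symmetryFrame a l p := by
    rw [hX0, hX1, hX2, hX3, hX4]
    rfl
  obtain rfl : F = levelFunction a := funext hF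
  refine ⟨fun p h₁ h₂ => ?_, fun p h₁ h₂ hp => ?_⟩
  · rw [hframe]
    exact linearIndependent_symmetryFrame hl0 (re_add_one_ne_zero h₁)
      (re_add_one_ne_zero ((abs_re_le_norm _).trans_lt h₂))
  · have hx := re_add_one_ne_zero h₁
    have hy := re_add_one_ne_zero ((abs_re_le_norm _).trans_lt h₂)
    rw [hframe, (hasFDerivAt_levelFunction hx hy).fderiv]
    exact ⟨finrank_ker_levelDifferential a p, span_symmetryFrame_eq_ker hl0 hla hx hy hp⟩
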